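/- arXiv:1910.06944 — 4 statements merged into one kernel-verified Lean document; each statement's English description precedes it below -/
import Mathlib

section
/- For n ≥ 5, the commutator subgroup B_n' of the braid group B_n is generated by the n−2 elements σ_1σ_i^{−1} for 2 ≤ i ≤ n−1. -/
/-- Artin braid relators for the braid group on `n` strands, with generators
`FreeGroup.of i` corresponding to `σ_{i+1}` for `i : Fin (n-1)`. -/
def braidRels (n : ℕ) : Set (FreeGroup (Fin (n - 1))) :=
  {r | ∃ i j : Fin (n - 1),
      ((j : ℕ) ≥ (i : ℕ) + 2 ∧
        r = FreeGroup.of i * FreeGroup.of j * (FreeGroup.of i)⁻¹ * (FreeGroup.of j)⁻¹) ∨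
      ((j : ℕ) = (i : ℕ) + 1 ∧
        r = FreeGroup.of i * FreeGroup.of j * FreeGroup.of i *
          (FreeGroup.of j * FreeGroup.of i * FreeGroup.of j)⁻¹)}

/-- The braid group on `n` strands. -/
def BraidGroup (n : ℕ) : Type := PresentedGroup (braidRels n)

instance (n : ℕ) : Group (BraidGroup n) :=
  inferInstanceAs (Group (PresentedGroup (braidRels n)))

/-- The Artin generator `σ_i` of `BraidGroup n`, for `1 ≤ i ≤ n-1` (junk value `1` otherwise). -/
def σ {n : ℕ} (i : ℕ) : BraidGroup n :=
  if h : 1 ≤ i ∧ i < n then PresentedGroup.of (⟨i - 1, by omega⟩ : Fin (n - 1)) else 1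

/-- The element `α = σ_1 σ_2 ⋯ σ_{n-1}`. -/
def α (n : ℕ) : BraidGroup n := ((List.range (n - 1)).map (fun i => σ (i + 1))).prod

/-- The half-twist `σ_j` for an index `j` taken modulo `n`, defined by conjugating
`σ_1` by the rotation `α`: `σ_{1+m} = α^m σ_1 α^{-m}`. -/
def σm {n : ℕ} (j : ℤ) : BraidGroup n := (α n) ^ (j - 1) * σ 1 * (α n) ^ (1 - j)

/-!
Modulo the commutator subgroup all the `σ_i` become equal (the braid relation `aba = bab`
forces `a = b` in an abelian group), so `H = ⟨σ_1 σ_i⁻¹⟩` lies in `B_n'`. Conversely, once `H` is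
known to be normal, `B_n / H` is generated by the single image of `σ_1`, hence abelian, so
`B_n' ≤ H`. Normality is checked on generators: conjugating `σ_1 σ_i⁻¹` by `σ_j⁻¹` gives a product
of elements `σ_p⁻¹ σ_q`, and conjugating by `σ_j` reduces, after multiplying by elements
`σ_p σ_q⁻¹`, to conjugation by `σ_1`, where the braid relation between `σ_1` and `σ_2` is used.
The elements `σ_p⁻¹ σ_q` lie in `H` because `σ_p⁻¹ σ_q = σ_q σ_p⁻¹` when `|p - q| ≥ 2`, and for
`n ≥ 5` any two indices are joined by a chain of such far-apart pairs (e.g. `2, 4, 1`).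
-/

open Subgroup

section GroupTheory

variable {G : Type*} [Group G]

theorem eq_of_mul_mul_eq_mul_mul {A : Type*} [CommGroup A] {a b : A}
    (h : a * b * a = b * a * b) : a = b :=
  mul_left_cancel (a := a * b) (by rw [h, mul_comm b a])

theorem mul_mul_mul_inv_mul_inv_eq_of_braid {a b : G} (h : a * b * a = b * a * b) :
    a * (a * b⁻¹) * a⁻¹ = a * b⁻¹ * (a⁻¹ * b) :=
  calc a * (a * b⁻¹) * a⁻¹ = a * a * (b * a * b)⁻¹ * b := by group
    _ = a * a * (a * b * a)⁻¹ * b := by rw [h]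
    _ = a * b⁻¹ * (a⁻¹ * b) := by group

theorem Subgroup.closure_normal_of_conj_mem {s t : Set G} (ht : closure t = ⊤)
    (h : ∀ g ∈ t, ∀ x ∈ s, g * x * g⁻¹ ∈ closure s ∧ g⁻¹ * x * g ∈ closure s) :
    (closure s).Normal := by
  have conj_mem {g : G} (hg : ∀ x ∈ s, g * x * g⁻¹ ∈ closure s) {y : G} (hy : y ∈ closure s) :
      g * y * g⁻¹ ∈ closure s :=
    closure_le (K := (closure s).comap (MulAut.conj g).toMonoidHom) |>.2 hg hy
  rw [← normalizer_eq_top_iff, eq_top_iff, ← ht, closure_le]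
  intro g hg
  refine mem_normalizer_iff.2 fun y ↦ ⟨conj_mem fun x hx ↦ (h g hg x hx).1, fun hy ↦ ?_⟩
  simpa [mul_assoc] using conj_mem (g := g⁻¹) (fun x hx ↦ by simpa using (h g hg x hx).2) hy

theorem commutator_le_of_mul_inv_mem {t : Set G} (ht : closure t = ⊤) {N : Subgroup G}
    [N.Normal] {a : G} (h : ∀ g ∈ t, a * g⁻¹ ∈ N) : commutator G ≤ N := by
  let f := QuotientGroup.mk' N
  have mem_zpowers (x : G) : f x ∈ zpowers (f a) := by
    have : closure t ≤ (zpowers (f a)).comap f := (closure_le _).2 fun g hg ↦ by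
      have : f a = f g := (QuotientGroup.eq_iff_div_mem).2 (by simpa [div_eq_mul_inv] using h g hg)
      simp [this]
    exact this (ht ▸ mem_top x)
  rw [_root_.commutator_def, commutator_le]
  intro x _ y _
  obtain ⟨k, hk⟩ := mem_zpowers_iff.1 (mem_zpowers x)
  obtain ⟨l, hl⟩ := mem_zpowers_iff.1 (mem_zpowers y)
  rw [← QuotientGroup.ker_mk' N, MonoidHom.mem_ker, map_commutatorElement,
    commutatorElement_eq_one_iff_commute, ← hk, ← hl]
  exact (Commute.refl _).zpow_zpow k l

end GroupTheory

namespace BraidGroup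

variable {n : ℕ}

theorem σ_eq_of {i : ℕ} (hi : 1 ≤ i) (hi' : i < n) :
    (σ i : BraidGroup n) = PresentedGroup.of (⟨i - 1, by omega⟩ : Fin (n - 1)) :=
  dif_pos ⟨hi, hi'⟩

theorem closure_image_σ : closure ((σ : ℕ → BraidGroup n) '' Set.Ico 1 n) = ⊤ := by
  refine eq_top_iff.2 <| (PresentedGroup.closure_range_of (braidRels n)).ge.trans <|
    (closure_le _).2 ?_
  rintro _ ⟨j, rfl⟩
  refine subset_closure ⟨j + 1, ⟨by omega, by omega⟩, ?_⟩
  rw [σ_eq_of (by omega) (by omega)]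
  rfl

theorem σ_commute {i j : ℕ} (hi : 1 ≤ i) (hij : i + 2 ≤ j) (hj : j < n) :
    Commute (σ i : BraidGroup n) (σ j) := by
  have rel := PresentedGroup.one_of_mem (rels := braidRels n)
    ⟨⟨i - 1, by omega⟩, ⟨j - 1, by omega⟩, Or.inl ⟨by simp only; omega, rfl⟩⟩
  simp only [map_mul, map_inv] at rel
  rw [mul_assoc, ← mul_inv_rev, mul_inv_eq_one] at rel
  rw [σ_eq_of hi (by omega), σ_eq_of (by omega) hj]
  exact rel

theorem σ_braid {i : ℕ} (hi : 1 ≤ i) (hi' : i + 1 < n) :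
    (σ i : BraidGroup n) * σ (i + 1) * σ i = σ (i + 1) * σ i * σ (i + 1) := by
  have rel := PresentedGroup.one_of_mem (rels := braidRels n)
    ⟨⟨i - 1, by omega⟩, ⟨i, by omega⟩, Or.inr ⟨by simp only; omega, rfl⟩⟩
  simp only [map_mul, map_inv] at rel
  rw [mul_inv_eq_one] at rel
  rw [σ_eq_of hi (by omega), σ_eq_of (by omega) hi']
  exact rel

theorem abelianization_of_σ {i : ℕ} (hi : 1 ≤ i) (hi' : i < n) :
    Abelianization.of (σ i : BraidGroup n) = Abelianization.of (σ 1) := by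
  induction i, hi using Nat.le_induction with
  | base => rfl
  | succ k hk ih =>
    rw [← ih (by omega)]
    refine (eq_of_mul_mul_eq_mul_mul ?_).symm
    simpa only [map_mul] using congrArg Abelianization.of (σ_braid hk hi')

theorem σ_one_mul_inv_σ_mem_commutator {i : ℕ} (hi : 1 ≤ i) (hi' : i < n) :
    (σ 1 : BraidGroup n) * (σ i)⁻¹ ∈ commutator (BraidGroup n) := by
  rw [← Abelianization.ker_of, MonoidHom.mem_ker, map_mul, map_inv, abelianization_of_σ hi hi',
    mul_inv_cancel]

def diffSubgroup (n : ℕ) : Subgroup (BraidGroup n) :=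
  closure {x | ∃ i, 2 ≤ i ∧ i ≤ n - 1 ∧ x = σ 1 * (σ i)⁻¹}

theorem σ_one_mul_inv_σ_mem {i : ℕ} (hi : 1 ≤ i) (hi' : i < n) :
    (σ 1 : BraidGroup n) * (σ i)⁻¹ ∈ diffSubgroup n := by
  rcases hi.eq_or_lt with rfl | hi
  · simp [one_mem]
  · exact subset_closure ⟨i, hi, by omega, rfl⟩

theorem σ_mul_inv_σ_mem {p q : ℕ} (hp : 1 ≤ p) (hp' : p < n) (hq : 1 ≤ q) (hq' : q < n) :
    (σ p : BraidGroup n) * (σ q)⁻¹ ∈ diffSubgroup n := by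
  convert mul_mem (inv_mem (σ_one_mul_inv_σ_mem hp hp')) (σ_one_mul_inv_σ_mem hq hq') using 1
  group

theorem σ_inv_mul_σ_mem_of_add_two_le {p q : ℕ} (hp : 1 ≤ p) (hpq : p + 2 ≤ q) (hq : q < n) :
    (σ p : BraidGroup n)⁻¹ * σ q ∈ diffSubgroup n ∧
      (σ q : BraidGroup n)⁻¹ * σ p ∈ diffSubgroup n := by
  have hcomm := σ_commute hp hpq hq
  rw [hcomm.inv_left.eq, hcomm.symm.inv_left.eq]
  exact ⟨σ_mul_inv_σ_mem (by omega) hq hp (by omega), σ_mul_inv_σ_mem hp (by omega) (by omega) hq⟩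

theorem σ_inv_mul_σ_one_mem (hn : 5 ≤ n) {p : ℕ} (hp : 1 ≤ p) (hp' : p < n) :
    (σ p : BraidGroup n)⁻¹ * σ 1 ∈ diffSubgroup n := by
  obtain rfl | rfl | hp3 := (by omega : p = 1 ∨ p = 2 ∨ 3 ≤ p)
  · simp [one_mem]
  · convert mul_mem (σ_inv_mul_σ_mem_of_add_two_le (n := n) (p := 2) (q := 4) (by omega)
      le_rfl (by omega)).1 (σ_inv_mul_σ_mem_of_add_two_le (n := n) (p := 1) (q := 4) le_rfl
      (by omega) (by omega)).2 using 1
    group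
  · exact (σ_inv_mul_σ_mem_of_add_two_le le_rfl hp3 hp').2

theorem σ_inv_mul_σ_mem (hn : 5 ≤ n) {p q : ℕ} (hp : 1 ≤ p) (hp' : p < n) (hq : 1 ≤ q)
    (hq' : q < n) : (σ p : BraidGroup n)⁻¹ * σ q ∈ diffSubgroup n := by
  convert mul_mem (σ_inv_mul_σ_one_mem hn hp hp') (inv_mem (σ_inv_mul_σ_one_mem hn hq hq'))
    using 1
  group

theorem σ_one_conj_mem (hn : 5 ≤ n) {i : ℕ} (hi : 2 ≤ i) (hi' : i < n) :
    (σ 1 : BraidGroup n) * (σ 1 * (σ i)⁻¹) * (σ 1)⁻¹ ∈ diffSubgroup n := by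
  rcases hi.eq_or_lt with rfl | hi
  · rw [mul_mul_mul_inv_mul_inv_eq_of_braid (σ_braid (n := n) le_rfl (by omega))]
    exact mul_mem (σ_one_mul_inv_σ_mem (by omega) hi') (σ_inv_mul_σ_mem hn le_rfl (by omega)
      (by omega) hi')
  · rw [((Commute.refl _).mul_right (σ_commute le_rfl hi hi').inv_right).mul_inv_cancel]
    exact σ_one_mul_inv_σ_mem (by omega) hi'

theorem σ_conj_mem (hn : 5 ≤ n) {i j : ℕ} (hi : 2 ≤ i) (hi' : i < n) (hj : 1 ≤ j)
    (hj' : j < n) :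
    (σ j : BraidGroup n) * (σ 1 * (σ i)⁻¹) * (σ j)⁻¹ ∈ diffSubgroup n ∧
      (σ j : BraidGroup n)⁻¹ * (σ 1 * (σ i)⁻¹) * σ j ∈ diffSubgroup n := by
  constructor
  · convert mul_mem (mul_mem (σ_mul_inv_σ_mem hj hj' le_rfl (by omega))
      (σ_one_conj_mem hn hi hi')) (σ_mul_inv_σ_mem le_rfl (by omega) hj hj') using 1
    group
  · convert mul_mem (σ_inv_mul_σ_mem hn hj hj' le_rfl (by omega))
      (σ_inv_mul_σ_mem hn (by omega) hi' hj hj') using 1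
    group

theorem diffSubgroup_normal (hn : 5 ≤ n) : (diffSubgroup n).Normal :=
  closure_normal_of_conj_mem closure_image_σ <| by
    rintro _ ⟨j, ⟨hj, hj'⟩, rfl⟩ _ ⟨i, hi, hi', rfl⟩
    exact σ_conj_mem hn hi (by omega) hj hj'

end BraidGroup

open BraidGroup

theorem commutator_generated (n : ℕ) (hn : 5 ≤ n) :
    Subgroup.closure {x : BraidGroup n | ∃ i, 2 ≤ i ∧ i ≤ n - 1 ∧ x = σ 1 * (σ i)⁻¹} =
      commutator (BraidGroup n) := by
  change diffSubgroup n = _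
  refine le_antisymm ((closure_le _).2 ?_) ?_
  · rintro _ ⟨i, hi, hi', rfl⟩
    exact σ_one_mul_inv_σ_mem_commutator (by omega) (by omega)
  · have := diffSubgroup_normal hn
    exact commutator_le_of_mul_inv_mem closure_image_σ <| by
      rintro _ ⟨i, ⟨hi, hi'⟩, rfl⟩
      exact σ_one_mul_inv_σ_mem hi hi'
end

section
/- In B_6, with a = σ_1σ_2^{−1}, b = σ_1σ_3^{−1}, r = α^2σ_1^{−10} where α = σ_1⋯σ_5, one has σ_1σ_5^{−1} = b·r·b·r^{−1}. -/
/-!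
Conjugation by `α = σ_1 ⋯ σ_{n-1}` shifts the generators, `α σ_i α⁻¹ = σ_{i+1}`, so conjugation
by `α²` sends `b = σ_1 σ_3⁻¹` to `σ_3 σ_5⁻¹`, while `σ_1¹⁰` commutes with `b`. Hence
`r b r⁻¹ = σ_3 σ_5⁻¹` and `b · r b r⁻¹ = σ_1 σ_3⁻¹ σ_3 σ_5⁻¹ = σ_1 σ_5⁻¹`.
-/

theorem σ_eq_of {n i : ℕ} (hi : 1 ≤ i) (hn : i < n) :
    (σ i : BraidGroup n) = PresentedGroup.of (⟨i - 1, by omega⟩ : Fin (n - 1)) :=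
  dif_pos ⟨hi, hn⟩

theorem σ_eq_one {n i : ℕ} (h : ¬(1 ≤ i ∧ i < n)) : (σ i : BraidGroup n) = 1 :=
  dif_neg h

theorem commute_σ_σ {n i j : ℕ} (h : i + 2 ≤ j) : Commute (σ i : BraidGroup n) (σ j) := by
  by_cases hi : 1 ≤ i
  · by_cases hj : j < n
    · rw [σ_eq_of hi (by omega), σ_eq_of (by omega) hj]
      exact commutatorElement_eq_one_iff_commute.mp
        (PresentedGroup.one_of_mem ⟨_, _, Or.inl ⟨by dsimp only; omega, rfl⟩⟩)
    · rw [σ_eq_one (i := j) (by omega)]; exact Commute.one_right _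
  · rw [σ_eq_one (i := i) (by omega)]; exact Commute.one_left _

theorem σ_braid {n i : ℕ} (hi : 1 ≤ i) (hn : i + 1 < n) :
    (σ i : BraidGroup n) * σ (i + 1) * σ i = σ (i + 1) * σ i * σ (i + 1) := by
  rw [σ_eq_of hi (by omega), σ_eq_of (by omega) hn]
  exact PresentedGroup.mk_eq_mk_of_mul_inv_mem ⟨_, _, Or.inr ⟨by dsimp only; omega, rfl⟩⟩

def σProd {n : ℕ} (k : ℕ) : BraidGroup n := ((List.range k).map fun i => σ (i + 1)).prod

theorem σProd_succ {n : ℕ} (k : ℕ) : (σProd (k + 1) : BraidGroup n) = σProd k * σ (k + 1) := by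
  simp [σProd, List.range_succ]

theorem commute_σProd_σ {n k j : ℕ} (h : k + 2 ≤ j) : Commute (σProd k : BraidGroup n) (σ j) := by
  induction k with
  | zero => exact Commute.one_left _
  | succ k ih => rw [σProd_succ]; exact (ih (by omega)).mul_left (commute_σ_σ (by omega))

theorem semiconjBy_σProd_σ {n k i : ℕ} (hi : 1 ≤ i) (hk : i + 1 ≤ k) (hn : i + 1 < n) :
    SemiconjBy (σProd k : BraidGroup n) (σ i) (σ (i + 1)) := by
  induction k, hk using Nat.le_induction with
  | base =>
    obtain ⟨m, rfl⟩ : ∃ m, i = m + 1 := ⟨i - 1, by omega⟩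
    have hcomm : Commute (σProd m : BraidGroup n) (σ (m + 1 + 1)) := commute_σProd_σ le_rfl
    calc σProd (m + 1 + 1) * σ (m + 1)
        = σProd m * (σ (m + 1) * σ (m + 1 + 1) * σ (m + 1)) := by
          rw [σProd_succ, σProd_succ]; group
      _ = σProd m * σ (m + 1 + 1) * (σ (m + 1) * σ (m + 1 + 1)) := by
          rw [σ_braid hi hn]; group
      _ = σ (m + 1 + 1) * σProd (m + 1 + 1) := by
          rw [hcomm.eq, σProd_succ, σProd_succ]; group
  | succ k hk ih =>
    rw [σProd_succ]
    exact ih.mul_left (commute_σ_σ (by omega)).symm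

theorem semiconjBy_α_σ {n i : ℕ} (hi : 1 ≤ i) (hn : i + 1 < n) :
    SemiconjBy (α n) (σ i) (σ (i + 1)) :=
  semiconjBy_σProd_σ hi (by omega) hn

theorem semiconjBy_α_pow_σ {n : ℕ} (m : ℕ) {i : ℕ} (hi : 1 ≤ i) (hn : i + m < n) :
    SemiconjBy (α n ^ m) (σ i) (σ (i + m)) := by
  induction m generalizing i with
  | zero => rw [pow_zero, add_zero]; exact SemiconjBy.one_left _
  | succ m ih =>
    rw [pow_succ, ← add_assoc, add_right_comm]
    exact (ih (by omega) (by omega)).mul_left (semiconjBy_α_σ hi (by omega))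

theorem B6_sigma15_identity :
    ∀ b r : BraidGroup 6, b = σ 1 * (σ 3)⁻¹ → r = (α 6) ^ 2 * ((σ 1 : BraidGroup 6) ^ 10)⁻¹ →
      σ 1 * (σ 5)⁻¹ = b * r * b * r⁻¹ := by
  intro b r hb hr
  have hshift : SemiconjBy (α 6 ^ 2) (σ 1 * (σ 3)⁻¹) (σ 3 * (σ 5)⁻¹) :=
    (semiconjBy_α_pow_σ 2 le_rfl (by norm_num)).mul_right
      (semiconjBy_α_pow_σ 2 (by norm_num) (by norm_num)).inv_right
  have hfix : Commute ((σ 1 : BraidGroup 6) ^ 10)⁻¹ (σ 1 * (σ 3)⁻¹) :=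
    (((Commute.refl _).mul_right (commute_σ_σ le_rfl).inv_right).pow_left 10).inv_left
  have hconj : r * b * r⁻¹ = σ 3 * (σ 5)⁻¹ := by
    rw [hb, hr]
    exact mul_inv_eq_of_eq_mul (hshift.mul_left hfix).eq
  calc σ 1 * (σ 5)⁻¹ = b * (σ 3 * (σ 5)⁻¹) := by rw [hb]; group
    _ = b * r * b * r⁻¹ := by rw [← hconj]; group
end

section
/- For n ≥ 5 and any 2 ≤ k ≤ n−2 with gcd(k,n)=1, set N = k(n−1), r_m = α^k σ_{1+mk}^{−N} and s_m = σ_{1+mk} σ_{1+(m+1)k}^{−1} in B_n (indices modulo n, with σ_j for j modulo n defined by σ_j = α^j σ_0' α^{−j} for a suitable base half-twist). Then r_{m+1} = r_m s_m^N and s_{m+1} = r_m s_m r_m^{−1} for all m ≥ 0. -/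
lemma rel_eq_one {n : ℕ} {r : FreeGroup (Fin (n-1))} (h : r ∈ braidRels n) :
    (PresentedGroup.mk (braidRels n) r : BraidGroup n) = 1 :=
  (QuotientGroup.eq_one_iff r).mpr (Subgroup.subset_normalClosure h)

lemma sigma_eq {n : ℕ} (i : ℕ) (h1 : 1 ≤ i) (h2 : i < n) :
    (σ i : BraidGroup n) = PresentedGroup.mk (braidRels n) (FreeGroup.of ⟨i - 1, by omega⟩) := by
  simp [σ, h1, h2]; rfl

lemma sigma_comm {n : ℕ} {i j : ℕ} (h1 : 1 ≤ i) (h2 : i + 2 ≤ j) (h3 : j < n) :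
    (σ i : BraidGroup n) * σ j = σ j * σ i := by
  rw [sigma_eq i h1 (by omega), sigma_eq j (by omega) h3]
  have hmem : (FreeGroup.of (⟨i-1, by omega⟩ : Fin (n-1)) * FreeGroup.of (⟨j-1, by omega⟩ : Fin (n-1)) *
      (FreeGroup.of (⟨i-1, by omega⟩ : Fin (n-1)))⁻¹ * (FreeGroup.of (⟨j-1, by omega⟩ : Fin (n-1)))⁻¹) ∈ braidRels n := by
    exact ⟨⟨i-1, by omega⟩, ⟨j-1, by omega⟩, Or.inl ⟨by simp; omega, rfl⟩⟩
  have := rel_eq_one hmem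
  simp only [map_mul, map_inv] at this
  set a := PresentedGroup.mk (braidRels n) (FreeGroup.of (⟨i-1, by omega⟩ : Fin (n-1)))
  set b := PresentedGroup.mk (braidRels n) (FreeGroup.of (⟨j-1, by omega⟩ : Fin (n-1)))
  have h : a * b * a⁻¹ * b⁻¹ = 1 := this
  calc a * b = (a * b * a⁻¹ * b⁻¹) * (b * a) := by group
    _ = b * a := by rw [h]; group

lemma sigma_braid {n : ℕ} {i : ℕ} (h1 : 1 ≤ i) (h3 : i + 1 < n) :
    (σ i : BraidGroup n) * σ (i+1) * σ i = σ (i+1) * σ i * σ (i+1) := by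
  rw [sigma_eq i h1 (by omega), sigma_eq (i+1) (by omega) h3]
  have hmem : (FreeGroup.of (⟨i-1, by omega⟩ : Fin (n-1)) * FreeGroup.of (⟨i+1-1, by omega⟩ : Fin (n-1)) *
      FreeGroup.of (⟨i-1, by omega⟩ : Fin (n-1)) *
      (FreeGroup.of (⟨i+1-1, by omega⟩ : Fin (n-1)) * FreeGroup.of (⟨i-1, by omega⟩ : Fin (n-1)) *
       FreeGroup.of (⟨i+1-1, by omega⟩ : Fin (n-1)))⁻¹) ∈ braidRels n := by
    exact ⟨⟨i-1, by omega⟩, ⟨i+1-1, by omega⟩, Or.inr ⟨by simp; omega, rfl⟩⟩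
  have := rel_eq_one hmem
  simp only [map_mul, map_inv] at this
  set a := PresentedGroup.mk (braidRels n) (FreeGroup.of (⟨i-1, by omega⟩ : Fin (n-1)))
  set b := PresentedGroup.mk (braidRels n) (FreeGroup.of (⟨i+1-1, by omega⟩ : Fin (n-1)))
  have h : a * b * a * (b * a * b)⁻¹ = 1 := this
  calc a * b * a = a * b * a * (b * a * b)⁻¹ * (b * a * b) := by group
    _ = b * a * b := by rw [h]; group

/-- Partial product `σ_1 σ_2 ⋯ σ_t`. -/
def Apart (n t : ℕ) : BraidGroup n := ((List.range t).map (fun i => σ (i + 1))).prod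

lemma Apart_succ (n t : ℕ) : Apart n (t+1) = Apart n t * σ (t+1) := by
  simp [Apart, List.range_succ]

lemma alpha_eq_Apart (n : ℕ) : α n = Apart n (n-1) := rfl

lemma Apart_comm {n : ℕ} (t j : ℕ) (hj : t + 2 ≤ j) (h3 : j < n) :
    Apart n t * σ j = σ j * Apart n t := by
  induction t with
  | zero => simp [Apart]
  | succ t ih =>
    rw [Apart_succ, mul_assoc, sigma_comm (by omega) (by omega : (t+1)+2 ≤ j) h3,
      ← mul_assoc, ih (by omega), mul_assoc]

lemma Apart_conj {n : ℕ} (i : ℕ) (h1 : 1 ≤ i) :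
    ∀ t, i + 1 ≤ t → t < n → Apart n t * σ i = σ (i+1) * Apart n t := by
  intro t ht
  induction t, ht using Nat.le_induction with
  | base =>
    intro htn
    have hi : i = (i-1) + 1 := by omega
    have hA : Apart n (i+1) = Apart n (i-1) * σ i * σ (i+1) := by
      rw [Apart_succ, hi, Apart_succ, ← hi]
    rw [hA, mul_assoc (Apart n (i-1) * σ i), mul_assoc (Apart n (i-1)),
      mul_assoc (Apart n (i-1))]
    rw [show σ i * (σ (i+1) * σ i) = σ i * σ (i+1) * σ i by group,
      sigma_braid h1 htn]
    rw [show Apart n (i-1) * (σ (i+1) * σ i * σ (i+1)) =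
      (Apart n (i-1) * σ (i+1)) * (σ i * σ (i+1)) by group]
    rw [Apart_comm (i-1) (i+1) (by omega) (by omega)]
    group
  | succ t ht ih =>
    intro htn
    rw [Apart_succ, mul_assoc, ← sigma_comm h1 (by omega : i + 2 ≤ t+1) (by omega),
      ← mul_assoc, ih (by omega), mul_assoc]

lemma alpha_conj {n : ℕ} (i : ℕ) (h1 : 1 ≤ i) (h2 : i + 1 ≤ n - 1) :
    α n * σ i = σ (i+1) * α n := by
  rw [alpha_eq_Apart]
  exact Apart_conj i h1 (n-1) h2 (by omega)

lemma alpha_pow_conj {n : ℕ} (k : ℕ) (hk : 1 + k ≤ n - 1) :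
    (α n)^k * σ 1 * ((α n)^k)⁻¹ = σ (1+k) := by
  induction k with
  | zero => simp
  | succ k ih =>
    have h : (α n)^(k+1) * σ 1 * ((α n)^(k+1))⁻¹
        = α n * ((α n)^k * σ 1 * ((α n)^k)⁻¹) * (α n)⁻¹ := by
      rw [pow_succ']; group
    rw [h, ih (by omega)]
    have := alpha_conj (n := n) (1+k) (by omega) (by omega)
    rw [show (1+k)+1 = 1+(k+1) by ring] at this
    rw [show α n * σ (1+k) * (α n)⁻¹ = (α n * σ (1+k)) * (α n)⁻¹ by group, this]
    group

lemma sigma1_comm_conj {n : ℕ} (k : ℕ) (hk1 : 2 ≤ k) (hk2 : k ≤ n - 2) (hn : 5 ≤ n) :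
    Commute (σ 1 : BraidGroup n) ((α n)^k * σ 1 * ((α n)^k)⁻¹) := by
  rw [alpha_pow_conj k (by omega)]
  exact sigma_comm (le_refl 1) (by omega) (by omega)

lemma σm_shift {n : ℕ} (j : ℤ) (c : ℕ) :
    (σm (j + c) : BraidGroup n) = (α n)^c * σm j * ((α n)^c)⁻¹ := by
  simp only [σm, ← zpow_natCast (α n) c]
  rw [show j + (c:ℤ) - 1 = (c:ℤ) + (j - 1) by ring,
    show 1 - (j + (c:ℤ)) = (1 - j) + (-(c:ℤ)) by ring, zpow_add, zpow_add, zpow_neg]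
  group

lemma σm_comm {n : ℕ} (hn : 5 ≤ n) (k : ℕ) (hk1 : 2 ≤ k) (hk2 : k ≤ n - 2) (a : ℤ) :
    Commute (σm a : BraidGroup n) (σm (a + k)) := by
  have hc := sigma1_comm_conj k hk1 hk2 hn
  unfold Commute SemiconjBy at hc ⊢
  rw [σm_shift a k]
  set g := (α n)^(a-1) with hg
  have hx : (σm a : BraidGroup n) = g * σ 1 * g⁻¹ := by
    simp only [σm, hg, show (1 : ℤ) - a = -(a-1) by ring, zpow_neg]
  rw [hx]
  set β := (α n)^k with hβ
  have hgβ : g * β = β * g := by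
    simp only [hg, hβ, ← zpow_natCast (α n) k, ← zpow_add, ← zpow_natCast (α n) k]
    ring_nf
  calc g * σ 1 * g⁻¹ * (β * (g * σ 1 * g⁻¹) * β⁻¹)
      = g * (σ 1 * (g⁻¹ * β * g) * σ 1 * (g⁻¹ * β⁻¹ * g)) * g⁻¹ := by group
    _ = g * (σ 1 * (β * σ 1 * β⁻¹)) * g⁻¹ := by
        rw [show g⁻¹ * β * g = β by rw [mul_assoc, ← hgβ]; group,
          show g⁻¹ * β⁻¹ * g = β⁻¹ by
            rw [show g⁻¹ * β⁻¹ = (β * g)⁻¹ by group, ← hgβ]; group]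
        group
    _ = g * ((β * σ 1 * β⁻¹) * σ 1) * g⁻¹ := by rw [hc]
    _ = β * (g * σ 1 * g⁻¹) * β⁻¹ * (g * σ 1 * g⁻¹) := by
        rw [show β * (g * σ 1 * g⁻¹) * β⁻¹ * (g * σ 1 * g⁻¹)
            = g * ((g⁻¹ * β * g) * σ 1 * (g⁻¹ * β⁻¹ * g) * σ 1) * g⁻¹ by group,
          show g⁻¹ * β * g = β by rw [mul_assoc, ← hgβ]; group,
          show g⁻¹ * β⁻¹ * g = β⁻¹ by
            rw [show g⁻¹ * β⁻¹ = (β * g)⁻¹ by group, ← hgβ]; group]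

theorem r_s_recursion (n : ℕ) (hn : 5 ≤ n) (k : ℕ) (hk1 : 2 ≤ k) (hk2 : k ≤ n - 2)
    (hg : Nat.gcd k n = 1) (N : ℕ) (hN : N = k * (n - 1))
    (r s : ℕ → BraidGroup n)
    (hr : ∀ m, r m = (α n) ^ k * ((σm (1 + m * k : ℕ)) ^ N)⁻¹)
    (hs : ∀ m, s m = σm (1 + m * k : ℕ) * (σm (1 + (m + 1) * k : ℕ))⁻¹) :
    ∀ m, r (m + 1) = r m * (s m) ^ N ∧ s (m + 1) = r m * s m * (r m)⁻¹ := by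
  intro m
  set a : ℤ := ((1 + m * k : ℕ) : ℤ) with ha
  have e1 : ((1 + (m + 1) * k : ℕ) : ℤ) = a + k := by push_cast [ha]; ring
  have e2 : ((1 + (m + 1 + 1) * k : ℕ) : ℤ) = (a + k) + k := by push_cast [ha]; ring
  set β := (α n)^k with hβ
  set x : BraidGroup n := σm a with hx
  set y : BraidGroup n := σm (a + k) with hy
  have hyx : y = β * x * β⁻¹ := σm_shift a k
  have hz : (σm ((a+k)+k) : BraidGroup n) = β * y * β⁻¹ := σm_shift (a+k) k
  have hc : Commute x y := σm_comm hn k hk1 hk2 a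
  constructor
  · rw [hr (m+1), hr m, hs m, e1, ← ha, ← hx, ← hy]
    rw [(hc.inv_right).mul_pow, inv_pow]
    group
  · rw [hs (m+1), hr m, hs m, e1, e2, ← ha, ← hx, ← hy, hz]
    have h3 : Commute (x * y⁻¹) (x^N) :=
      Commute.mul_left ((Commute.refl x).pow_right N) (hc.symm.inv_left.pow_right N)
    calc y * (β * y * β⁻¹)⁻¹
        = (β * x * β⁻¹) * (β * y * β⁻¹)⁻¹ := by rw [← hyx]
      _ = β * ((x^N)⁻¹ * (x^N * (x * y⁻¹))) * β⁻¹ := by group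
      _ = β * ((x^N)⁻¹ * ((x * y⁻¹) * x^N)) * β⁻¹ := by rw [← h3.eq]
      _ = β * (x^N)⁻¹ * (x * y⁻¹) * (β * (x^N)⁻¹)⁻¹ := by group
end

section
/- In B_5, with α = σ_1σ_2σ_3σ_4 and σ_0 = ασ_4α^{−1}, the identity σ_1σ_0^{−1} = (σ_1^2σ_2σ_1^{−3})(σ_3σ_4^{−1})(σ_1^3σ_3^{−1}σ_2^{−1}σ_1^{−1}) holds, and moreover σ_1^2σ_2σ_1^{−3} = (σ_1σ_4^{−1})^2(σ_2σ_4^{−1})(σ_4σ_1^{−1})^3 and σ_1^3σ_3^{−1}σ_2^{−1}σ_1^{−1} = (σ_1σ_3^{−1})(σ_1σ_4^{−1})^2(σ_4σ_2^{−1})(σ_4σ_1^{−1}). -/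
theorem BraidGroup.commute_σ_of_add_two_le {n i j : ℕ} (hi : 1 ≤ i) (hij : i + 2 ≤ j)
    (hj : j < n) :
    Commute (σ i : BraidGroup n) (σ j) := by
  let x : Fin (n - 1) := ⟨i - 1, by omega⟩
  let y : Fin (n - 1) := ⟨j - 1, by omega⟩
  have hx : (σ i : BraidGroup n) = PresentedGroup.of x := dif_pos ⟨hi, by omega⟩
  have hy : (σ j : BraidGroup n) = PresentedGroup.of y := dif_pos ⟨by omega, hj⟩
  have hrel : FreeGroup.of x * FreeGroup.of y * (FreeGroup.of x)⁻¹ * (FreeGroup.of y)⁻¹ ∈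
      braidRels n :=
    ⟨x, y, Or.inl ⟨by simp only [x, y]; omega, rfl⟩⟩
  have h := PresentedGroup.one_of_mem hrel
  rw [map_mul, map_inv, map_mul, map_inv, mul_inv_eq_one, mul_inv_eq_iff_eq_mul] at h
  rw [hx, hy]
  exact h

section
variable {G : Type*} [Group G] {a b c d : G}

theorem mul_inv_conj_eq_of_commute (had : Commute a d) (hab : Commute a b) :
    a * (a * c * d * b * b * (a * c * d * b)⁻¹)⁻¹ =
      (a ^ 2 * c * (a ^ 3)⁻¹) * (d * b⁻¹) * (a ^ 3 * d⁻¹ * c⁻¹ * a⁻¹) := by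
  have key : Commute (a ^ 3) (d * b⁻¹) := (had.mul_right hab.inv_right).pow_left 3
  calc a * (a * c * d * b * b * (a * c * d * b)⁻¹)⁻¹
      = a ^ 2 * c * (d * b⁻¹) * d⁻¹ * c⁻¹ * a⁻¹ := by rw [sq]; group
    _ = a ^ 2 * c * ((a ^ 3)⁻¹ * (d * b⁻¹) * a ^ 3) * d⁻¹ * c⁻¹ * a⁻¹ := by
        rw [key.inv_mul_cancel]
    _ = _ := by group

theorem mul_inv_sq_mul_eq_of_commute (hab : Commute a b) (hcb : Commute c b) :
    (a * b⁻¹) ^ 2 * (c * b⁻¹) * (b * a⁻¹) ^ 3 = a ^ 2 * c * (a ^ 3)⁻¹ := by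
  calc (a * b⁻¹) ^ 2 * (c * b⁻¹) * (b * a⁻¹) ^ 3
      = a ^ 2 * ((b ^ 2)⁻¹ * c * b ^ 2) * (a ^ 3)⁻¹ := by
        rw [hab.inv_right.mul_pow, hab.symm.inv_right.mul_pow]; group
    _ = a ^ 2 * c * (a ^ 3)⁻¹ := by rw [(hcb.pow_right 2).symm.inv_mul_cancel]

theorem mul_inv_mul_eq_of_commute (had : Commute a d) (hab : Commute a b) (hcb : Commute c b) :
    a * d⁻¹ * (a * b⁻¹) ^ 2 * (b * c⁻¹) * (b * a⁻¹) = a ^ 3 * d⁻¹ * c⁻¹ * a⁻¹ := by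
  calc a * d⁻¹ * (a * b⁻¹) ^ 2 * (b * c⁻¹) * (b * a⁻¹)
      = a * d⁻¹ * a * (b⁻¹ * a * b) * (b⁻¹ * c⁻¹ * b) * a⁻¹ := by rw [sq]; group
    _ = a * (d⁻¹ * (a * a)) * c⁻¹ * a⁻¹ := by
        rw [hab.symm.inv_mul_cancel, hcb.inv_left.symm.inv_mul_cancel]; group
    _ = a ^ 3 * d⁻¹ * c⁻¹ * a⁻¹ := by
        rw [(had.inv_right.mul_left had.inv_right).symm.eq, pow_three]; group

end

theorem B5_identities :
    ∀ σ₀ : BraidGroup 5, σ₀ = α 5 * σ 4 * (α 5)⁻¹ →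
      (σ 1 * σ₀⁻¹ =
        (σ 1 ^ 2 * σ 2 * (σ 1 ^ 3)⁻¹) * (σ 3 * (σ 4)⁻¹) *
          (σ 1 ^ 3 * (σ 3)⁻¹ * (σ 2)⁻¹ * (σ 1)⁻¹)) ∧
      ((σ 1 : BraidGroup 5) ^ 2 * σ 2 * (σ 1 ^ 3)⁻¹ =
        (σ 1 * (σ 4)⁻¹) ^ 2 * (σ 2 * (σ 4)⁻¹) * (σ 4 * (σ 1)⁻¹) ^ 3) ∧
      ((σ 1 : BraidGroup 5) ^ 3 * (σ 3)⁻¹ * (σ 2)⁻¹ * (σ 1)⁻¹ =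
        (σ 1 * (σ 3)⁻¹) * (σ 1 * (σ 4)⁻¹) ^ 2 * (σ 4 * (σ 2)⁻¹) * (σ 4 * (σ 1)⁻¹)) := by
  rintro σ₀ rfl
  have hα : α 5 = σ 1 * σ 2 * σ 3 * σ 4 := by simp [α, List.range_succ, mul_assoc]
  have h13 : Commute (σ 1 : BraidGroup 5) (σ 3) :=
    BraidGroup.commute_σ_of_add_two_le le_rfl le_rfl (by norm_num)
  have h14 : Commute (σ 1 : BraidGroup 5) (σ 4) :=
    BraidGroup.commute_σ_of_add_two_le le_rfl (by norm_num) (by norm_num)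
  have h24 : Commute (σ 2 : BraidGroup 5) (σ 4) :=
    BraidGroup.commute_σ_of_add_two_le (by norm_num) le_rfl (by norm_num)
  rw [hα]
  exact ⟨mul_inv_conj_eq_of_commute h13 h14, (mul_inv_sq_mul_eq_of_commute h14 h24).symm,
    (mul_inv_mul_eq_of_commute h13 h14 h24).symm⟩
end
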